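/- arXiv:2312.16259 — 4 statements merged into one kernel-verified Lean document; each statement's English description precedes it below -/
import Mathlib

section
/- If G and H are Left dead-ends with G ≥ H, then the formal birthday (height of the game tree) of G is at most the formal birthday of H. -/
/-- A Left dead-end: a partizan game in which no subposition has a Left option,
modeled as a finitely-branching rooted tree of Right options. -/
inductive LDE : Type where
  | node : List LDE → LDE

/-- The (Right) options of a Left dead-end. -/
def LDE.opts : LDE → List LDE
  | .node l => l

/-- The dead-end order: `G ≥ H` iff every Right option of `G` is `≥` some Right
option of `H`, and if `G` has no Right options then neither does `H`. -/
def LDE.Ge : LDE → LDE → Prop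
  | .node gs, .node hs =>
      (∀ g ∈ gs, ∃ h ∈ hs, LDE.Ge g h) ∧ (gs = [] → hs = [])
termination_by G _ => sizeOf G
decreasing_by
  have := List.sizeOf_lt_of_mem ‹g ∈ gs›; simp; omega

/-- Equality (equivalence) in the dead-end order. -/
def LDE.Eqv (G H : LDE) : Prop := LDE.Ge G H ∧ LDE.Ge H G

/-- The formal birthday: the height of the game tree. -/
def LDE.fb : LDE → ℕ
  | .node l => l.attach.foldr (fun g m => max (LDE.fb g.1 + 1) m) 0
termination_by G => sizeOf G
decreasing_by
  have := List.sizeOf_lt_of_mem g.2; simp; omega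

theorem List.foldr_max_succ_le_iff {α : Type*} (f : α → ℕ) (l : List α) (n : ℕ) :
    l.foldr (fun a m => max (f a + 1) m) 0 ≤ n ↔ ∀ a ∈ l, f a + 1 ≤ n := by
  induction l with
  | nil => simp
  | cons a t ih => simp [ih]

namespace LDE

theorem fb_node_le_iff (l : List LDE) (n : ℕ) :
    (node l).fb ≤ n ↔ ∀ g ∈ l, g.fb + 1 ≤ n := by
  rw [fb, List.foldr_max_succ_le_iff]
  exact ⟨fun h g hg => h ⟨g, hg⟩ (List.mem_attach _ _), fun h g _ => h g.1 g.2⟩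

theorem fb_lt_fb_node_of_mem {g : LDE} {l : List LDE} (hg : g ∈ l) : g.fb < (node l).fb :=
  (fb_node_le_iff l _).mp le_rfl g hg

theorem fb_node_le_fb_node {gs hs : List LDE} (hle : ∀ g ∈ gs, ∃ h ∈ hs, g.fb ≤ h.fb) :
    (node gs).fb ≤ (node hs).fb := by
  rw [fb_node_le_iff]
  intro g hg
  obtain ⟨h, hh, hgh⟩ := hle g hg
  exact Nat.succ_le_of_lt (hgh.trans_lt (fb_lt_fb_node_of_mem hh))

end LDE

/-- if `G ≥ H` in the dead-end order, then the formal birthday of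
`G` is at most that of `H`. -/
theorem stmt1 (G H : LDE) (h : LDE.Ge G H) : G.fb ≤ H.fb :=
  match G, H, h with
  | .node gs, .node hs, h => by
    rw [LDE.Ge] at h
    refine LDE.fb_node_le_fb_node fun g hg => ?_
    obtain ⟨k, hk, hgk⟩ := h.1 g hg
    exact ⟨k, hk, stmt1 g k hgk⟩
termination_by sizeOf G
decreasing_by
  have := List.sizeOf_lt_of_mem hg; simp; omega
end

section
/- Suppose G and H are Left dead-ends such that no subposition of G or of H has a dominated Right option (i.e., in every subposition, the Right options form an antichain with respect to equivalence: no Right option is ≤ another distinct Right option). If G = H (meaning G ≥ H and H ≥ G), then G and H are identical as game trees (isomorphic). -/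
/-- No subposition has a dominated Right option: at every subposition, distinct
entries of the option list are incomparable. -/
inductive LDE.Reduced : LDE → Prop
  | mk (l : List LDE) :
      l.Pairwise (fun a b => ¬ LDE.Ge a b ∧ ¬ LDE.Ge b a) →
      (∀ g ∈ l, LDE.Reduced g) →
      LDE.Reduced (.node l)

/-- `G` and `H` are identical as game trees (isomorphic up to reordering of
options). -/
def LDE.Ident : LDE → LDE → Prop
  | .node gs, .node hs =>
      (∀ g ∈ gs, ∃ h ∈ hs.attach, LDE.Ident g h.1) ∧
      (∀ h ∈ hs, ∃ g ∈ gs.attach, LDE.Ident g.1 h)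
termination_by G H => sizeOf G + sizeOf H
decreasing_by
  · have h1 := List.sizeOf_lt_of_mem ‹g ∈ gs›
    have h2 := List.sizeOf_lt_of_mem h.2
    simp; omega
  · have h1 := List.sizeOf_lt_of_mem g.2
    have h2 := List.sizeOf_lt_of_mem ‹h ∈ hs›
    simp; omega

namespace LDE

theorem ge_refl : ∀ G : LDE, Ge G G
  | .node gs => by
      rw [Ge]
      exact ⟨fun g hg => ⟨g, hg, ge_refl g⟩, id⟩
termination_by G => sizeOf G
decreasing_by
  have := List.sizeOf_lt_of_mem ‹g ∈ gs›; simp; omega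

theorem ge_trans : ∀ G H K : LDE, Ge G H → Ge H K → Ge G K
  | .node gs, .node hs, .node ks => by
      rw [Ge, Ge, Ge]
      rintro ⟨hGH, hGH_nil⟩ ⟨hHK, hHK_nil⟩
      refine ⟨fun g hg => ?_, hHK_nil ∘ hGH_nil⟩
      obtain ⟨h, hh, hgh⟩ := hGH g hg
      obtain ⟨k, hk, hhk⟩ := hHK h hh
      exact ⟨k, hk, ge_trans g h k hgh hhk⟩
termination_by G _ _ => sizeOf G
decreasing_by
  have := List.sizeOf_lt_of_mem ‹g ∈ gs›; simp; omega

theorem Eqv.symm {G H : LDE} (h : Eqv G H) : Eqv H G := ⟨h.2, h.1⟩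

theorem Reduced.of_mem {l : List LDE} {g : LDE} (h : Reduced (.node l)) (hg : g ∈ l) :
    Reduced g := by
  cases h with
  | mk _ _ hopts => exact hopts g hg

theorem Reduced.eq_of_ge {l : List LDE} {a b : LDE} (h : Reduced (.node l))
    (ha : a ∈ l) (hb : b ∈ l) (hab : Ge a b) : a = b := by
  cases h with
  | mk _ hpair _ =>
    by_contra hne
    have : Std.Symm (fun a b : LDE => ¬ Ge a b ∧ ¬ Ge b a) := ⟨fun _ _ h => ⟨h.2, h.1⟩⟩
    exact (hpair.forall ha hb hne).1 hab

/-- Matching `g` to an option `h` of `H` and back to an option `g'` of `G` gives `g ≥ g'`,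
so `g = g'` because `G` has no dominated options. -/
theorem Reduced.exists_eqv_of_mem {gs hs : List LDE} {g : LDE} (hG : Reduced (.node gs))
    (hGH : Eqv (.node gs) (.node hs)) (hg : g ∈ gs) : ∃ h ∈ hs, Eqv g h := by
  obtain ⟨hGH, hHG⟩ := hGH
  rw [Ge] at hGH hHG
  obtain ⟨h, hh, hgh⟩ := hGH.1 g hg
  obtain ⟨g', hg', hhg'⟩ := hHG.1 h hh
  obtain rfl : g = g' := hG.eq_of_ge hg hg' (ge_trans g h g' hgh hhg')
  exact ⟨h, hh, hgh, hhg'⟩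

theorem Eqv.ident_of_reduced : ∀ {G H : LDE}, Reduced G → Reduced H → Eqv G H → Ident G H
  | .node gs, .node hs, hG, hH, hGH => by
      rw [Ident]
      constructor
      · intro g hg
        obtain ⟨h, hh, hgh⟩ := hG.exists_eqv_of_mem hGH hg
        exact ⟨⟨h, hh⟩, List.mem_attach _ _, hgh.ident_of_reduced (hG.of_mem hg) (hH.of_mem hh)⟩
      · intro h hh
        obtain ⟨g, hg, hhg⟩ := hH.exists_eqv_of_mem hGH.symm hh
        exact ⟨⟨g, hg⟩, List.mem_attach _ _,
          hhg.symm.ident_of_reduced (hG.of_mem hg) (hH.of_mem hh)⟩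
termination_by G H => sizeOf G + sizeOf H
decreasing_by
  all_goals
    have := List.sizeOf_lt_of_mem ‹_ ∈ gs›
    have := List.sizeOf_lt_of_mem ‹_ ∈ hs›
    simp; omega

end LDE

/-- Left dead-ends with no dominated options in any subposition
that are equal in the dead-end order are identical as game trees. -/
theorem stmt5 (G H : LDE) (hG : LDE.Reduced G) (hH : LDE.Reduced H)
    (h1 : LDE.Ge G H) (h2 : LDE.Ge H G) : LDE.Ident G H :=
  LDE.Eqv.ident_of_reduced hG hH ⟨h1, h2⟩
end

section
/- The dead-end order ≥ on Left dead-ends respects addition: if G ≥ H, then G + J ≥ H + J for every Left dead-end J. -/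
/-- Disjunctive sum of Left dead-ends: the Right options of `G + H` are
`G^R + H` and `G + H^R`. -/
def LDE.add : LDE → LDE → LDE
  | .node gs, .node hs =>
      .node (gs.attach.map (fun g => LDE.add g.1 (.node hs)) ++
             hs.attach.map (fun h => LDE.add (.node gs) h.1))
termination_by g h => sizeOf g + sizeOf h
decreasing_by
  · have := List.sizeOf_lt_of_mem g.2; simp; omega
  · have := List.sizeOf_lt_of_mem h.2; simp; omega

namespace LDE

theorem sizeOf_lt_of_mem_opts {G g : LDE} (hg : g ∈ G.opts) : sizeOf g < sizeOf G := by
  cases G with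
  | node gs => have := List.sizeOf_lt_of_mem hg; simp only [opts, node.sizeOf_spec] at *; omega

theorem ge_iff (G H : LDE) :
    G.Ge H ↔ (∀ g ∈ G.opts, ∃ h ∈ H.opts, g.Ge h) ∧ (G.opts = [] → H.opts = []) := by
  cases G; cases H; rw [Ge]; rfl

theorem opts_add (G H : LDE) :
    (G.add H).opts = G.opts.map (·.add H) ++ H.opts.map (G.add ·) := by
  cases G; cases H
  rw [add]
  simp only [opts, List.map_attach_eq_pmap, List.pmap_eq_map]

theorem add_mem_opts_add_of_mem_left {G g : LDE} (H : LDE) (hg : g ∈ G.opts) :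
    g.add H ∈ (G.add H).opts := by
  rw [opts_add]; exact List.mem_append_left _ (List.mem_map_of_mem hg)

theorem add_mem_opts_add_of_mem_right (G : LDE) {H h : LDE} (hh : h ∈ H.opts) :
    G.add h ∈ (G.add H).opts := by
  rw [opts_add]; exact List.mem_append_right _ (List.mem_map_of_mem hh)

theorem opts_add_eq_nil_iff (G H : LDE) :
    (G.add H).opts = [] ↔ G.opts = [] ∧ H.opts = [] := by
  simp only [opts_add, List.append_eq_nil_iff, List.map_eq_nil_iff]

theorem Ge.add_right {G H : LDE} (hGH : G.Ge H) (J : LDE) : (G.add J).Ge (H.add J) := by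
  have ⟨hopts, hnil⟩ := (ge_iff G H).1 hGH
  refine (ge_iff _ _).2 ⟨fun x hx => ?_, fun hGJ => ?_⟩
  · rw [opts_add, List.mem_append, List.mem_map, List.mem_map] at hx
    rcases hx with ⟨g, hg, rfl⟩ | ⟨j, hj, rfl⟩
    · obtain ⟨h, hh, hgh⟩ := hopts g hg
      have := sizeOf_lt_of_mem_opts hg
      exact ⟨h.add J, add_mem_opts_add_of_mem_left J hh, hgh.add_right J⟩
    · have := sizeOf_lt_of_mem_opts hj
      exact ⟨H.add j, add_mem_opts_add_of_mem_right H hj, hGH.add_right j⟩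
  · rw [opts_add_eq_nil_iff] at hGJ ⊢
    exact ⟨hnil hGJ.1, hGJ.2⟩
termination_by sizeOf G + sizeOf J

end LDE

/-- the dead-end order respects addition. -/
theorem stmt7 (G H J : LDE) (h : LDE.Ge G H) :
    LDE.Ge (G.add J) (H.add J) :=
  h.add_right J
end

section
/- Every finitely generated dead-ending universe has finite test sets, and more precisely: for any Left dead-end H, there are only finitely many equivalence classes of Left dead-ends G with G ≥ H. -/
/-!
Along `G ≥ H` every Right option of `G` lies above a Right option of `H`, so the formal birthday
can only drop: `G ≥ H` forces `birthday G ≤ birthday H`. Classes of bounded birthday are finite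
in number: if every dead-end of birthday `< n` is equivalent to a member of a finite list `R`, then a
dead-end of birthday `< n + 1` is equivalent to the node whose options are the members of `R`
equivalent to one of its options, a sublist of `R`.
-/

namespace LDE

@[elab_as_elim]
theorem induction {motive : LDE → Prop}
    (node : ∀ l, (∀ g ∈ l, motive g) → motive (.node l)) : ∀ G, motive G
  | .node l => node l fun g _ => induction node g

theorem ge_node_iff {gs hs : List LDE} :
    Ge (.node gs) (.node hs) ↔ (∀ g ∈ gs, ∃ h ∈ hs, Ge g h) ∧ (gs = [] → hs = []) := by
  rw [Ge]

theorem node_eqv_node {gs ks : List LDE} (hg : ∀ g ∈ gs, ∃ k ∈ ks, Eqv g k)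
    (hk : ∀ k ∈ ks, ∃ g ∈ gs, Eqv g k) : Eqv (.node gs) (.node ks) := by
  refine ⟨ge_node_iff.2 ⟨fun g hg' => ?_, ?_⟩, ge_node_iff.2 ⟨fun k hk' => ?_, ?_⟩⟩
  · obtain ⟨k, hk', hgk⟩ := hg g hg'
    exact ⟨k, hk', hgk.1⟩
  · rintro rfl
    exact List.eq_nil_iff_forall_not_mem.2 fun k hk' => by simpa using hk k hk'
  · obtain ⟨g, hg', hgk⟩ := hk k hk'
    exact ⟨g, hg', hgk.2⟩
  · rintro rfl
    exact List.eq_nil_iff_forall_not_mem.2 fun g hg' => by simpa using hg g hg'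

def birthday : LDE → ℕ
  | .node l => (l.map fun g => g.birthday + 1).foldr max 0

theorem birthday_node_le_iff {l : List LDE} {n : ℕ} :
    (node l).birthday ≤ n ↔ ∀ g ∈ l, g.birthday < n := by
  rw [birthday]
  refine ⟨fun h g hg => List.le_max_of_le (List.mem_map_of_mem hg) le_rfl |>.trans h,
    fun h => List.max_le_of_forall_le _ _ ?_⟩
  simpa using h

theorem birthday_le_of_ge {G H : LDE} (h : Ge G H) : G.birthday ≤ H.birthday := by
  induction G using LDE.induction generalizing H with
  | node gs ih =>
    obtain ⟨hs⟩ := H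
    refine birthday_node_le_iff.2 fun g hg => ?_
    obtain ⟨h', hh', hgh⟩ := (ge_node_iff.1 h).1 g hg
    exact (ih g hg hgh).trans_lt (birthday_node_le_iff.1 le_rfl h' hh')

def reps : ℕ → List LDE
  | 0 => []
  | n + 1 => (reps n).sublists.map node

open Classical in
theorem exists_eqv_mem_reps {n : ℕ} {G : LDE} (hG : G.birthday < n) :
    ∃ K ∈ reps n, Eqv G K := by
  induction n generalizing G with
  | zero => omega
  | succ n ih =>
    obtain ⟨gs⟩ := G
    have hopts (g) (hg : g ∈ gs) : ∃ k ∈ reps n, Eqv g k :=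
      ih (birthday_node_le_iff.1 (Nat.lt_succ_iff.1 hG) g hg)
    refine ⟨node ((reps n).filter fun k => ∃ g ∈ gs, Eqv g k),
      List.mem_map_of_mem (List.mem_sublists.2 List.filter_sublist), node_eqv_node ?_ ?_⟩
    · intro g hg
      obtain ⟨k, hk, hgk⟩ := hopts g hg
      exact ⟨k, List.mem_filter.2 ⟨hk, decide_eq_true ⟨g, hg, hgk⟩⟩, hgk⟩
    · intro k hk
      simpa using (List.mem_filter.1 hk).2

end LDE

/-- for any Left dead-end `H`, there are only finitely many
equivalence classes of Left dead-ends `G` with `G ≥ H`. -/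
theorem stmt19 (H : LDE) :
    ∃ L : List LDE, ∀ G : LDE, LDE.Ge G H → ∃ K ∈ L, LDE.Eqv G K :=
  ⟨LDE.reps (H.birthday + 1), fun _ hG =>
    LDE.exists_eqv_mem_reps (Nat.lt_succ_of_le (LDE.birthday_le_of_ge hG))⟩
end
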